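/- In the two-sample ADF model with k₁ = k₂ = k, assume n₁/N → κ ∈ (0,1) as min(n₁,n₂) → ∞. Then the pooled variance estimator σ̂² = (n₂/N)·(n₁−1)^{−1} Σ_{i=1}^{n₁}(δ(Σ̂₁)'(S_{i1} − vec(Σ̂₁)))² + (n₁/N)·(n₂−1)^{−1} Σ_{i=1}^{n₂}(δ(Σ̂₂)'(S_{i2} − vec(Σ̂₂)))² converges in probability to σ̃² = (1−κ)·σ̃₁² + κ·σ̃₂², where σ̃_j² = δ(Σ_j)'·Cov(vec(Y_j Y_j'))·δ(Σ_j) and Y_j is a generic observation from sample j. -/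

import Mathlib

open MeasureTheory ProbabilityTheory Filter Matrix Finset Asymptotics

noncomputable section

open scoped Classical in
/-- Index set for the on-and-below-diagonal entries of a `k × k` matrix;
its cardinality is `q = k(k+1)/2`. -/
abbrev SymIdx (k : ℕ) : Type := {p : Fin k × Fin k // (p.2 : ℕ) ≤ (p.1 : ℕ)}

/-- `vec(Σ)`: the vector of on-and-below-diagonal entries of a matrix. -/
def vecm {k : ℕ} (S : Matrix (Fin k) (Fin k) ℝ) : SymIdx k → ℝ := fun p => S p.1.1 p.1.2

/-- Reconstruct a symmetric matrix from its on-and-below-diagonal entries. -/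
def unvec {k : ℕ} (v : SymIdx k → ℝ) : Matrix (Fin k) (Fin k) ℝ :=
  Matrix.of fun i j =>
    if h : (j : ℕ) ≤ (i : ℕ) then v ⟨(i, j), h⟩ else v ⟨(j, i), le_of_not_ge h⟩

/-- `1'Σ1`, the sum of all entries of a matrix. -/
def oneSum {k : ℕ} (S : Matrix (Fin k) (Fin k) ℝ) : ℝ := ∑ i, ∑ j, S i j

/-- Cronbach's coefficient alpha `α_C(Σ) = (k/(k-1))·(1 - tr(Σ)/(1'Σ1))`. -/
def alphaC {k : ℕ} (S : Matrix (Fin k) (Fin k) ℝ) : ℝ :=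
  ((k : ℝ) / ((k : ℝ) - 1)) * (1 - S.trace / oneSum S)

/-- Cronbach's alpha as a function of `vec(Σ)`. -/
def alphaVec (k : ℕ) : (SymIdx k → ℝ) → ℝ := fun v => alphaC (unvec v)

/-- The gradient `δ(Σ)` of `vec(Σ) ↦ α_C(Σ)` at `vec(Σ)`. -/
def deltaVec {k : ℕ} (S : Matrix (Fin k) (Fin k) ℝ) : SymIdx k → ℝ :=
  fun p => fderiv ℝ (alphaVec k) (vecm S) (Pi.single p 1)

/-- Outer product `x x'`. -/
def outer {k : ℕ} (x : Fin k → ℝ) : Matrix (Fin k) (Fin k) ℝ := Matrix.of fun a b => x a * x b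

/-- Sample mean of the first `n` observations. -/
def sampleMean (k n : ℕ) (X : ℕ → Fin k → ℝ) : Fin k → ℝ :=
  (n : ℝ)⁻¹ • ∑ i ∈ range n, X i

/-- Sample covariance matrix of the first `n` observations. -/
def sampleCov (k n : ℕ) (X : ℕ → Fin k → ℝ) : Matrix (Fin k) (Fin k) ℝ :=
  ((n : ℝ) - 1)⁻¹ • ∑ i ∈ range n, outer (fun a => X i a - sampleMean k n X a)

/-- Convergence in distribution: weak convergence of the laws. -/
def TendstoInDistribution {Ω E : Type*} [MeasurableSpace Ω] [MeasurableSpace E]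
    [TopologicalSpace E] (μ : Measure Ω) (Y : ℕ → Ω → E) (ν : Measure E) : Prop :=
  ∀ f : BoundedContinuousFunction E ℝ,
    Tendsto (fun n => ∫ ω, f (Y n ω) ∂μ) atTop (nhds (∫ x, f x ∂ν))

/-- The multivariate Gaussian distribution with mean `0` and covariance matrix `C`
(defined as the law of `C^{1/2} Z` for a standard Gaussian vector `Z`; junk value if
`C` is not positive semidefinite). -/
def mvGauss {ι : Type*} [Fintype ι] [DecidableEq ι] (C : Matrix ι ι ℝ) : Measure (ι → ℝ) :=
  letI := Classical.propDecidable C.PosSemidef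
  if h : C.PosSemidef then
    (Measure.pi fun _ : ι => gaussianReal 0 1).map (fun x => (h.1.eigenvectorUnitary.1 * diagonal (fun i => √(h.1.eigenvalues i)) *
      (star h.1.eigenvectorUnitary : Matrix ι ι ℝ)) *ᵥ x)
  else 0

open scoped Classical in
/-- The pooled two-sample ADF variance estimator `σ̂²` of Maydeu-Olivares et al. -/
def pooledVar2 (k1 k2 n1 n2 : ℕ) (X : ℕ → Fin k1 → ℝ) (Y : ℕ → Fin k2 → ℝ) : ℝ :=
  ((n2 : ℝ) / ((n1 : ℝ) + (n2 : ℝ))) * (((n1 : ℝ) - 1)⁻¹ * ∑ i ∈ range n1,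
      (∑ p, deltaVec (sampleCov k1 n1 X) p *
        (vecm (outer fun a => X i a - sampleMean k1 n1 X a) p
          - vecm (sampleCov k1 n1 X) p)) ^ 2)
  + ((n1 : ℝ) / ((n1 : ℝ) + (n2 : ℝ))) * (((n2 : ℝ) - 1)⁻¹ * ∑ i ∈ range n2,
      (∑ p, deltaVec (sampleCov k2 n2 Y) p *
        (vecm (outer fun a => Y i a - sampleMean k2 n2 Y a) p
          - vecm (sampleCov k2 n2 Y) p)) ^ 2)

/-- The studentized two-sample statistic `T_n = M_n / σ̂`. -/
def Tstat2 (k1 k2 n1 n2 : ℕ) (X : ℕ → Fin k1 → ℝ) (Y : ℕ → Fin k2 → ℝ) : ℝ :=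
  Real.sqrt ((n1 : ℝ) * (n2 : ℝ) / ((n1 : ℝ) + (n2 : ℝ))) *
    (alphaC (sampleCov k1 n1 X) - alphaC (sampleCov k2 n2 Y))
  / Real.sqrt (pooledVar2 k1 k2 n1 n2 X Y)

/-- The studentized statistic computed from pooled data `Z` (first `n1` vectors form
group 1, the remaining `n2` form group 2). -/
def TstatF (k n1 n2 : ℕ) (Z : Fin (n1 + n2) → Fin k → ℝ) : ℝ :=
  Tstat2 k k n1 n2
    (fun i => if h : i < n1 + n2 then Z ⟨i, h⟩ else 0)
    (fun i => if h : n1 + i < n1 + n2 then Z ⟨n1 + i, h⟩ else 0)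

/-- The permutation distribution function `R_n(x) = (N!)^{-1} Σ_π 1{T_n^π ≤ x}`. -/
def permDistF (k n1 n2 : ℕ) (Z : Fin (n1 + n2) → Fin k → ℝ) (x : ℝ) : ℝ :=
  ((n1 + n2).factorial : ℝ)⁻¹ * ∑ π : Equiv.Perm (Fin (n1 + n2)),
    if TstatF k n1 n2 (fun i => Z (π i)) ≤ x then 1 else 0

open scoped Classical in
/-- The `(1-α)`-quantile `c_n^π(α)` of the permutation distribution. -/
def permCrit (k n1 n2 : ℕ) (a : ℝ) (Z : Fin (n1 + n2) → Fin k → ℝ) : ℝ :=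
  sInf {x : ℝ | 1 - a ≤ permDistF k n1 n2 Z x}

/-- Permutation probability of `{T_n^π > c}`. -/
def permGt (k n1 n2 : ℕ) (Z : Fin (n1 + n2) → Fin k → ℝ) (c : ℝ) : ℝ :=
  ((n1 + n2).factorial : ℝ)⁻¹ * ∑ π : Equiv.Perm (Fin (n1 + n2)),
    if c < TstatF k n1 n2 (fun i => Z (π i)) then 1 else 0

open scoped Classical in
/-- Permutation probability of `{T_n^π = c}`. -/
def permEq (k n1 n2 : ℕ) (Z : Fin (n1 + n2) → Fin k → ℝ) (c : ℝ) : ℝ :=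
  ((n1 + n2).factorial : ℝ)⁻¹ * ∑ π : Equiv.Perm (Fin (n1 + n2)),
    if TstatF k n1 n2 (fun i => Z (π i)) = c then 1 else 0

open scoped Classical in
/-- The randomization constant `γ_n^π(α)` of the classical randomized permutation test. -/
def permGamma (k n1 n2 : ℕ) (a : ℝ) (Z : Fin (n1 + n2) → Fin k → ℝ) : ℝ :=
  if permEq k n1 n2 Z (permCrit k n1 n2 a Z) = 0 then 0
  else (a - permGt k n1 n2 Z (permCrit k n1 n2 a Z))
        / permEq k n1 n2 Z (permCrit k n1 n2 a Z)

open scoped Classical in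
/-- The randomized permutation test `ψ_n = 1{T_n > c_n^π(α)} + γ_n^π(α)·1{T_n = c_n^π(α)}`. -/
def permTest (k n1 n2 : ℕ) (a : ℝ) (Z : Fin (n1 + n2) → Fin k → ℝ) : ℝ :=
  (if permCrit k n1 n2 a Z < TstatF k n1 n2 Z then 1 else 0)
  + permGamma k n1 n2 a Z * (if TstatF k n1 n2 Z = permCrit k n1 n2 a Z then 1 else 0)

/-- Pooling two samples: the first `n1` observations come from `X`, the rest from `Y`. -/
def pool (k n1 : ℕ) (X Y : ℕ → Fin k → ℝ) : ℕ → Fin k → ℝ :=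
  fun i => if i < n1 then X i else Y (i - n1)

/-- The conditional parametric-bootstrap distribution function `F_n⋆(x)` of the
studentized statistic, for observed group covariance matrices `S1`, `S2`. -/
def bootCDF (k1 k2 n1 n2 : ℕ) (S1 : Matrix (Fin k1) (Fin k1) ℝ)
    (S2 : Matrix (Fin k2) (Fin k2) ℝ) (x : ℝ) : ℝ :=
  (((Measure.pi fun _ : Fin n1 => mvGauss S1).prod
      (Measure.pi fun _ : Fin n2 => mvGauss S2))
    {p | Tstat2 k1 k2 n1 n2
        (fun i => if h : i < n1 then p.1 ⟨i, h⟩ else 0)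
        (fun i => if h : i < n2 then p.2 ⟨i, h⟩ else 0) ≤ x}).toReal

/-- The bootstrap critical value `c_n⋆(α)`. -/
def bootCrit (k1 k2 n1 n2 : ℕ) (a : ℝ) (S1 : Matrix (Fin k1) (Fin k1) ℝ)
    (S2 : Matrix (Fin k2) (Fin k2) ℝ) : ℝ :=
  sInf {x : ℝ | 1 - a ≤ bootCDF k1 k2 n1 n2 S1 S2 x}

end


/-!
By the strong law of large numbers, almost surely every empirical moment of order at most four
converges to the corresponding moment. Expanding a product of centred coordinates over subsets
of its factors shows that centring at the sample mean does not change these limits, since the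
sample mean tends to `0`. Hence the sample covariance tends to `Σ`, the empirical covariance of
the vectors `S_i` tends to `Cov(vec(Y Y'))`, and `δ(Σ̂) → δ(Σ)` because `α_C` is smooth where
`1'Σ1 ≠ 0`. So each one-sample estimator converges almost surely, the weights tend to `1 - κ`
and `κ`, and almost sure convergence gives convergence in probability.
-/

open Topology

noncomputable def avg (n : ℕ) (f : ℕ → ℝ) : ℝ := (∑ i ∈ range n, f i) / n

lemma avg_sum_mul {α : Type*} (n : ℕ) (s : Finset α) (f : α → ℕ → ℝ) (c : α → ℝ) :
    avg n (fun i => ∑ a ∈ s, f a i * c a) = ∑ a ∈ s, avg n (f a) * c a := by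
  simp only [avg, Finset.sum_comm (s := range n), ← Finset.sum_mul, Finset.sum_div,
    mul_div_right_comm]

theorem tendsto_avg_prod_sub {ι : Type*} [Fintype ι] [DecidableEq ι] {x : ℕ → ι → ℝ}
    {m : ℕ → ι → ℝ} {c : Finset ι → ℝ} (hm : Tendsto m atTop (𝓝 0))
    (hx : ∀ T, Tendsto (fun n => avg n fun i => ∏ j ∈ T, x i j) atTop (𝓝 (c T))) :
    Tendsto (fun n => avg n fun i => ∏ j, (x i j - m n j)) atTop (𝓝 (c univ)) := by
  have expand : ∀ n, (avg n fun i => ∏ j, (x i j - m n j))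
      = ∑ T ∈ univ.powerset, avg n (fun i => ∏ j ∈ T, x i j) * ∏ j ∈ univ \ T, -m n j := by
    intro n
    simp only [sub_eq_add_neg, Finset.prod_add, avg_sum_mul]
  have hlim : Tendsto (fun n => ∑ T ∈ univ.powerset,
      avg n (fun i => ∏ j ∈ T, x i j) * ∏ j ∈ univ \ T, -m n j) atTop
      (𝓝 (∑ T ∈ univ.powerset, c T * ∏ j ∈ univ \ T, -(0 : ι → ℝ) j)) :=
    tendsto_finsetSum _ fun T _ => (hx T).mul <| tendsto_finsetProd _ fun j _ =>
      ((continuous_apply j).tendsto _ |>.comp hm).neg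
  have hval : ∑ T ∈ univ.powerset, c T * ∏ j ∈ univ \ T, -(0 : ι → ℝ) j = c univ := by
    rw [Finset.sum_eq_single_of_mem _ (Finset.mem_powerset_self _)]
    · simp
    · intro T _ hT
      obtain ⟨j, hj⟩ := Finset.sdiff_nonempty.2 fun h => hT (Finset.univ_subset_iff.1 h)
      rw [Finset.prod_eq_zero hj (by simp), mul_zero]
  simpa only [expand, hval] using hlim

lemma pow_le_one_add_pow {t : ℝ} (ht : 0 ≤ t) {m p : ℕ} (hmp : m ≤ p) : t ^ m ≤ 1 + t ^ p := by
  rcases le_total t 1 with h | h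
  · linarith [pow_le_one₀ ht h (n := m), pow_nonneg ht p]
  · linarith [pow_le_pow_right₀ h hmp]

section Moments

variable {Ω : Type*} [MeasurableSpace Ω] {μ : Measure Ω} {k m : ℕ}

lemma integrable_prod_apply [IsProbabilityMeasure μ] {Z : Ω → Fin k → ℝ} (hZ : Measurable Z)
    (hmom : Integrable (fun ω => ‖Z ω‖ ^ m) μ) {ι : Type*} {s : Finset ι} (e : ι → Fin k)
    (hs : #s ≤ m) : Integrable (fun ω => ∏ j ∈ s, Z ω (e j)) μ := by
  refine ((integrable_const 1).add hmom).mono' (by fun_prop) (ae_of_all _ fun ω => ?_)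
  calc ‖∏ j ∈ s, Z ω (e j)‖ = ∏ j ∈ s, ‖Z ω (e j)‖ := norm_prod _ _
    _ ≤ ∏ _j ∈ s, ‖Z ω‖ := Finset.prod_le_prod (fun _ _ => norm_nonneg _)
        fun j _ => norm_le_pi_norm (Z ω) (e j)
    _ = ‖Z ω‖ ^ #s := Finset.prod_const _
    _ ≤ 1 + ‖Z ω‖ ^ m := pow_le_one_add_pow (norm_nonneg _) hs

/-- A monomial of degree at most `r` in the coordinates is encoded by an index map
`e : Fin s → Fin k` together with the set `T` of factors it keeps. -/
def TendstoEmpiricalMoments (μ : Measure Ω) (Z : Ω → Fin k → ℝ) (r : ℕ)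
    (x : ℕ → Fin k → ℝ) : Prop :=
  ∀ s ≤ r, ∀ (e : Fin s → Fin k) (T : Finset (Fin s)),
    Tendsto (fun n => avg n fun i => ∏ j ∈ T, x i (e j)) atTop
      (𝓝 (∫ ω, ∏ j ∈ T, Z ω (e j) ∂μ))

lemma TendstoEmpiricalMoments.mono {Z : Ω → Fin k → ℝ} {x : ℕ → Fin k → ℝ} {r r' : ℕ}
    (h : TendstoEmpiricalMoments μ Z r x) (hr : r' ≤ r) : TendstoEmpiricalMoments μ Z r' x :=
  fun s hs => h s (hs.trans hr)

theorem ae_tendstoEmpiricalMoments [IsProbabilityMeasure μ] {X : ℕ → Ω → Fin k → ℝ}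
    (hmeas : ∀ i, Measurable (X i)) (hindep : iIndepFun X μ)
    (hid : ∀ i, IdentDistrib (X i) (X 0) μ μ) (hmom : Integrable (fun ω => ‖X 0 ω‖ ^ m) μ) :
    ∀ᵐ ω ∂μ, TendstoEmpiricalMoments μ (X 0) m fun i => X i ω := by
  refine ae_all_iff.2 fun s => ?_
  by_cases hs : s ≤ m
  swap
  · exact ae_of_all _ fun _ h => absurd h hs
  refine (ae_all_iff.2 fun e => ae_all_iff.2 fun T => ?_).mono fun _ h _ => h
  have hf : Measurable fun x : Fin k → ℝ => ∏ j ∈ T, x (e j) := by fun_prop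
  exact strong_law_ae_real (fun i ω => ∏ j ∈ T, X i ω (e j))
    (integrable_prod_apply (hmeas 0) hmom e ((card_le_univ T).trans (by simpa using hs)))
    (fun i j hij => (hindep.indepFun hij).comp hf hf) fun i => (hid i).comp hf

lemma covariance_vecm_outer [IsProbabilityMeasure μ] {Z : Ω → Fin k → ℝ} (hZ : Measurable Z)
    (hmom : Integrable (fun ω => ‖Z ω‖ ^ m) μ) (hm : 4 ≤ m) (p q : SymIdx k) :
    cov[fun ω => vecm (outer (Z ω)) p, fun ω => vecm (outer (Z ω)) q; μ]
      = (∫ ω, Z ω p.1.1 * Z ω p.1.2 * Z ω q.1.1 * Z ω q.1.2 ∂μ)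
        - (∫ ω, Z ω p.1.1 * Z ω p.1.2 ∂μ) * ∫ ω, Z ω q.1.1 * Z ω q.1.2 ∂μ := by
  have hL2 : ∀ p : SymIdx k, MemLp (fun ω => vecm (outer (Z ω)) p) 2 μ := fun p => by
    refine (memLp_two_iff_integrable_sq ?_).2 ?_
    · simp only [vecm, outer, Matrix.of_apply]
      fun_prop
    have h := integrable_prod_apply hZ hmom ![p.1.1, p.1.2, p.1.1, p.1.2] (s := univ)
      (by simpa using hm)
    simp only [Fin.prod_univ_four, cons_val_zero, cons_val_one, Matrix.cons_val] at h
    simpa only [vecm, outer, Matrix.of_apply, sq, ← mul_assoc] using h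
  rw [covariance_eq_sub (hL2 p) (hL2 q)]
  simp only [vecm, outer, Matrix.of_apply, Pi.mul_apply, ← mul_assoc]

end Moments

section Alpha

variable {k : ℕ}

lemma unvec_vecm {S : Matrix (Fin k) (Fin k) ℝ} (hS : S.IsSymm) : unvec (vecm S) = S := by
  ext i j
  simp only [unvec, vecm, Matrix.of_apply]
  split_ifs
  · rfl
  · exact hS.apply i j

lemma contDiff_oneSum_unvec : ContDiff ℝ ⊤ fun v : SymIdx k → ℝ => oneSum (unvec v) := by
  refine ContDiff.sum fun i _ => ContDiff.sum fun j _ => ?_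
  simp only [unvec, Matrix.of_apply]
  split_ifs <;> exact contDiff_apply ℝ ℝ _

lemma contDiff_trace_unvec : ContDiff ℝ ⊤ fun v : SymIdx k → ℝ => (unvec v).trace := by
  simp only [Matrix.trace, Matrix.diag, unvec, Matrix.of_apply, le_refl, dite_true]
  exact ContDiff.sum fun i _ => contDiff_apply ℝ ℝ _

lemma continuousAt_fderiv_alphaVec {v : SymIdx k → ℝ} (hv : oneSum (unvec v) ≠ 0) :
    ContinuousAt (fderiv ℝ (alphaVec k)) v := by
  have hU : IsOpen {v : SymIdx k → ℝ | oneSum (unvec v) ≠ 0} :=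
    isOpen_ne_fun contDiff_oneSum_unvec.continuous continuous_const
  have hα : ContDiffOn ℝ ⊤ (alphaVec k) {v | oneSum (unvec v) ≠ 0} :=
    contDiffOn_const.mul <| contDiffOn_const.sub <|
      contDiff_trace_unvec.contDiffOn.div contDiff_oneSum_unvec.contDiffOn fun _ hv => hv
  exact (hα.continuousOn_fderiv_of_isOpen hU (by simp)).continuousAt (hU.mem_nhds hv)

theorem tendsto_deltaVec {α : Type*} {l : Filter α} {S' : α → Matrix (Fin k) (Fin k) ℝ}
    {S : Matrix (Fin k) (Fin k) ℝ} (hS : S.IsSymm) (h0 : oneSum S ≠ 0)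
    (h : ∀ a b, Tendsto (fun t => S' t a b) l (𝓝 (S a b))) :
    Tendsto (fun t => deltaVec (S' t)) l (𝓝 (deltaVec S)) := by
  have hvec : Tendsto (fun t => vecm (S' t)) l (𝓝 (vecm S)) :=
    tendsto_pi_nhds.2 fun p => h _ _
  have hfd := (continuousAt_fderiv_alphaVec (by rwa [unvec_vecm hS])).tendsto.comp hvec
  exact tendsto_pi_nhds.2 fun p =>
    ((ContinuousLinearMap.apply ℝ ℝ (Pi.single p 1)).continuous.tendsto _).comp hfd

end Alpha

section OneSample

variable {k : ℕ}

lemma sampleMean_apply (n : ℕ) (x : ℕ → Fin k → ℝ) (a : Fin k) :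
    sampleMean k n x a = avg n fun i => x i a := by
  simp [sampleMean, avg, Finset.sum_apply, div_eq_inv_mul]

lemma sampleCov_apply (n : ℕ) (x : ℕ → Fin k → ℝ) (a b : Fin k) :
    sampleCov k n x a b = ((n : ℝ) - 1)⁻¹ *
      ∑ i ∈ range n, (x i a - sampleMean k n x a) * (x i b - sampleMean k n x b) := by
  simp [sampleCov, outer, Matrix.sum_apply]

lemma sum_vecm_outer_sub_sampleMean {n : ℕ} (hn : n ≠ 1) (x : ℕ → Fin k → ℝ) (p : SymIdx k) :
    ∑ i ∈ range n, vecm (outer fun a => x i a - sampleMean k n x a) p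
      = ((n : ℝ) - 1) * vecm (sampleCov k n x) p := by
  have : (n : ℝ) - 1 ≠ 0 := sub_ne_zero.2 (by exact_mod_cast hn)
  simp only [vecm, sampleCov_apply, outer, Matrix.of_apply]
  field_simp

lemma sum_sub_mul_sub_of_sum_eq {n : ℕ} {s t : ℕ → ℝ} {u w : ℝ}
    (hs : ∑ i ∈ range n, s i = ((n : ℝ) - 1) * u) (ht : ∑ i ∈ range n, t i = ((n : ℝ) - 1) * w) :
    ∑ i ∈ range n, (s i - u) * (t i - w) = ∑ i ∈ range n, s i * t i - ((n : ℝ) - 2) * u * w := by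
  have : ∀ i, (s i - u) * (t i - w) = s i * t i - w * s i - u * t i + u * w := fun i => by ring
  simp only [this, Finset.sum_add_distrib, Finset.sum_sub_distrib, ← Finset.mul_sum, hs, ht,
    Finset.sum_const, card_range, nsmul_eq_mul]
  ring

lemma sum_sq_dotProduct_sub {ι : Type*} [Fintype ι] (d v : ι → ℝ) (s : ℕ → ι → ℝ) (n : ℕ) :
    ∑ i ∈ range n, (∑ p, d p * (s i p - v p)) ^ 2
      = ∑ p, ∑ q, d p * (∑ i ∈ range n, (s i p - v p) * (s i q - v q)) * d q := by
  simp only [sq, Finset.mul_sum, Finset.sum_mul]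
  rw [Finset.sum_comm]
  refine Finset.sum_congr rfl fun p _ => ?_
  rw [Finset.sum_comm]
  exact Finset.sum_congr rfl fun q _ => Finset.sum_congr rfl fun i _ => by ring

/-- `pooledVar2 k k n₁ n₂ X Y` unfolds to `n₂/N * adfVar k n₁ X + n₁/N * adfVar k n₂ Y`. -/
noncomputable def adfVar (k n : ℕ) (x : ℕ → Fin k → ℝ) : ℝ :=
  ((n : ℝ) - 1)⁻¹ * ∑ i ∈ range n,
    (∑ p, deltaVec (sampleCov k n x) p *
      (vecm (outer fun a => x i a - sampleMean k n x a) p - vecm (sampleCov k n x) p)) ^ 2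

noncomputable def adfCov (k n : ℕ) (x : ℕ → Fin k → ℝ) (p q : SymIdx k) : ℝ :=
  ((n : ℝ) - 1)⁻¹ * ∑ i ∈ range n,
    (vecm (outer fun a => x i a - sampleMean k n x a) p - vecm (sampleCov k n x) p) *
    (vecm (outer fun a => x i a - sampleMean k n x a) q - vecm (sampleCov k n x) q)

lemma adfVar_eq_sum_adfCov (k n : ℕ) (x : ℕ → Fin k → ℝ) :
    adfVar k n x = ∑ p, ∑ q,
      deltaVec (sampleCov k n x) p * adfCov k n x p q * deltaVec (sampleCov k n x) q := by
  rw [adfVar, sum_sq_dotProduct_sub, Finset.mul_sum]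
  refine Finset.sum_congr rfl fun p _ => ?_
  rw [Finset.mul_sum]
  refine Finset.sum_congr rfl fun q _ => ?_
  rw [adfCov]
  ring

end OneSample

lemma tendsto_natCast_add_div_natCast_add (a b : ℝ) :
    Tendsto (fun n : ℕ => ((n : ℝ) + a) / ((n : ℝ) + b)) atTop (𝓝 1) := by
  simpa [add_comm] using tendsto_add_mul_div_add_mul_atTop_nhds a b 1 one_ne_zero

namespace TendstoEmpiricalMoments

variable {Ω : Type*} [MeasurableSpace Ω] {μ : Measure Ω} {k r : ℕ} {Z : Ω → Fin k → ℝ}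
  {x : ℕ → Fin k → ℝ}

lemma tendsto_sampleMean (hx : TendstoEmpiricalMoments μ Z 1 x)
    (hmean : ∀ a, ∫ ω, Z ω a ∂μ = 0) : Tendsto (fun n => sampleMean k n x) atTop (𝓝 0) :=
  tendsto_pi_nhds.2 fun a => by simpa [sampleMean_apply, hmean a] using hx 1 le_rfl ![a] univ

lemma tendsto_avg_centered_prod (hx : TendstoEmpiricalMoments μ Z r x)
    (hm : Tendsto (fun n => sampleMean k n x) atTop (𝓝 0)) {s : ℕ} (hs : s ≤ r)
    (e : Fin s → Fin k) :
    Tendsto (fun n => avg n fun i => ∏ j, (x i (e j) - sampleMean k n x (e j))) atTop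
      (𝓝 (∫ ω, ∏ j, Z ω (e j) ∂μ)) :=
  tendsto_avg_prod_sub (tendsto_pi_nhds.2 fun j => tendsto_pi_nhds.1 hm (e j)) (hx s hs e)

lemma tendsto_sampleCov (hx : TendstoEmpiricalMoments μ Z 2 x)
    (hm : Tendsto (fun n => sampleMean k n x) atTop (𝓝 0)) (a b : Fin k) :
    Tendsto (fun n => sampleCov k n x a b) atTop (𝓝 (∫ ω, Z ω a * Z ω b ∂μ)) := by
  have h := (tendsto_natCast_add_div_natCast_add 0 (-1)).mul
    (hx.tendsto_avg_centered_prod hm le_rfl ![a, b])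
  simp only [Fin.prod_univ_two, Matrix.cons_val_zero, Matrix.cons_val_one, one_mul] at h
  refine h.congr' ?_
  filter_upwards [eventually_ge_atTop 1] with n hn
  have : (n : ℝ) ≠ 0 := by positivity
  rw [sampleCov_apply, avg]
  field_simp
  ring

lemma tendsto_adfCov (hx : TendstoEmpiricalMoments μ Z 4 x)
    (hm : Tendsto (fun n => sampleMean k n x) atTop (𝓝 0)) (p q : SymIdx k) :
    Tendsto (fun n => adfCov k n x p q) atTop
      (𝓝 ((∫ ω, Z ω p.1.1 * Z ω p.1.2 * Z ω q.1.1 * Z ω q.1.2 ∂μ)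
        - (∫ ω, Z ω p.1.1 * Z ω p.1.2 ∂μ) * ∫ ω, Z ω q.1.1 * Z ω q.1.2 ∂μ)) := by
  have hcov := hx.mono (by norm_num) |>.tendsto_sampleCov hm
  have h := ((tendsto_natCast_add_div_natCast_add 0 (-1)).mul
    (hx.tendsto_avg_centered_prod hm le_rfl ![p.1.1, p.1.2, q.1.1, q.1.2])).sub
    ((tendsto_natCast_add_div_natCast_add (-2) (-1)).mul
      ((hcov p.1.1 p.1.2).mul (hcov q.1.1 q.1.2)))
  simp only [add_zero, Fin.prod_univ_four, cons_val_zero, cons_val_one, Matrix.cons_val,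
    one_mul] at h
  refine h.congr' ?_
  filter_upwards [eventually_ge_atTop 2] with n hn
  have : (n : ℝ) ≠ 0 := by positivity
  have : (n : ℝ) - 1 ≠ 0 := sub_ne_zero.2 (by exact_mod_cast (by omega : n ≠ 1))
  rw [adfCov, sum_sub_mul_sub_of_sum_eq (sum_vecm_outer_sub_sampleMean (by omega) x p)
    (sum_vecm_outer_sub_sampleMean (by omega) x q), avg]
  simp only [vecm, outer, Matrix.of_apply, ← mul_assoc, ← sub_eq_add_neg]
  field_simp

theorem tendsto_adfVar (hx : TendstoEmpiricalMoments μ Z 4 x) (hmean : ∀ a, ∫ ω, Z ω a ∂μ = 0)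
    {S : Matrix (Fin k) (Fin k) ℝ} (hS : ∀ a b, S a b = ∫ ω, Z ω a * Z ω b ∂μ)
    (h0 : oneSum S ≠ 0) {C : Matrix (SymIdx k) (SymIdx k) ℝ}
    (hC : ∀ p q, C p q = (∫ ω, Z ω p.1.1 * Z ω p.1.2 * Z ω q.1.1 * Z ω q.1.2 ∂μ)
      - (∫ ω, Z ω p.1.1 * Z ω p.1.2 ∂μ) * ∫ ω, Z ω q.1.1 * Z ω q.1.2 ∂μ) :
    Tendsto (fun n => adfVar k n x) atTop
      (𝓝 (∑ p, ∑ q, deltaVec S p * C p q * deltaVec S q)) := by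
  have hm := (hx.mono (by norm_num)).tendsto_sampleMean hmean
  have hcov : ∀ a b, Tendsto (fun n => sampleCov k n x a b) atTop (𝓝 (S a b)) := fun a b => by
    simpa only [hS] using (hx.mono (by norm_num)).tendsto_sampleCov hm a b
  have hSymm : S.IsSymm := Matrix.IsSymm.ext fun a b => by simp only [hS, mul_comm]
  have hδ := tendsto_deltaVec hSymm h0 hcov
  simp only [adfVar_eq_sum_adfCov]
  refine tendsto_finsetSum _ fun p _ => tendsto_finsetSum _ fun q _ =>
    ((tendsto_pi_nhds.1 hδ p).mul ?_).mul (tendsto_pi_nhds.1 hδ q)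
  simpa only [hC] using hx.tendsto_adfCov hm p q

end TendstoEmpiricalMoments

lemma measurable_adfVar {Ω : Type*} [MeasurableSpace Ω] {k : ℕ} {X : ℕ → Ω → Fin k → ℝ}
    (hX : ∀ i, Measurable (X i)) (n : ℕ) : Measurable fun ω => adfVar k n fun i => X i ω := by
  have hcov : ∀ a b, Measurable fun ω => sampleCov k n (fun i => X i ω) a b := fun a b => by
    simp only [sampleCov_apply, sampleMean_apply, avg]
    fun_prop
  have hδ : ∀ p, Measurable fun ω => deltaVec (sampleCov k n fun i => X i ω) p := fun p =>
    (measurable_fderiv_apply_const ℝ _ _).comp (measurable_pi_lambda _ fun q => hcov _ _)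
  simp only [adfVar, vecm, outer, sampleMean_apply, avg, Matrix.of_apply]
  fun_prop

theorem pooledVariance_consistent_general
    {Ω : Type*} [MeasurableSpace Ω] (μ : MeasureTheory.Measure Ω) [IsProbabilityMeasure μ]
    (k : ℕ)
    (X Y : ℕ → Ω → (Fin k → ℝ))
    (hmeasX : ∀ i, Measurable (X i)) (hmeasY : ∀ i, Measurable (Y i))
    (hindepX : iIndepFun X μ)
    (hindepY : iIndepFun Y μ)
    (hidX : ∀ i, IdentDistrib (X i) (X 0) μ μ)
    (hidY : ∀ i, IdentDistrib (Y i) (Y 0) μ μ)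
    (hmeanX : ∀ a, ∫ ω, X 0 ω a ∂μ = 0) (hmeanY : ∀ a, ∫ ω, Y 0 ω a ∂μ = 0)
    (hmomX : Integrable (fun ω => ‖X 0 ω‖ ^ 8) μ)
    (hmomY : Integrable (fun ω => ‖Y 0 ω‖ ^ 8) μ)
    (S1 S2 : Matrix (Fin k) (Fin k) ℝ)
    (hS1 : ∀ a b, S1 a b = ∫ ω, X 0 ω a * X 0 ω b ∂μ)
    (hS2 : ∀ a b, S2 a b = ∫ ω, Y 0 ω a * Y 0 ω b ∂μ)
    (hpos1 : 0 < oneSum S1) (hpos2 : 0 < oneSum S2)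
    (C1 C2m : Matrix (SymIdx k) (SymIdx k) ℝ)
    (hC1 : ∀ p q, C1 p q = ∫ ω,
      (vecm (outer (X 0 ω)) p - ∫ ω', vecm (outer (X 0 ω')) p ∂μ) *
      (vecm (outer (X 0 ω)) q - ∫ ω', vecm (outer (X 0 ω')) q ∂μ) ∂μ)
    (hC2 : ∀ p q, C2m p q = ∫ ω,
      (vecm (outer (Y 0 ω)) p - ∫ ω', vecm (outer (Y 0 ω')) p ∂μ) *
      (vecm (outer (Y 0 ω)) q - ∫ ω', vecm (outer (Y 0 ω')) q ∂μ) ∂μ)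
    (n1 n2 : ℕ → ℕ) (hn1 : Tendsto n1 atTop atTop) (hn2 : Tendsto n2 atTop atTop)
    (κ : ℝ)
    (hratio : Tendsto (fun t => (n1 t : ℝ) / ((n1 t : ℝ) + (n2 t : ℝ))) atTop (nhds κ)) :
    TendstoInMeasure μ
      (fun t ω => pooledVar2 k k (n1 t) (n2 t) (fun i => X i ω) (fun i => Y i ω))
      atTop
      (fun _ => (1 - κ) * (∑ p, ∑ q, deltaVec S1 p * C1 p q * deltaVec S1 q) + κ * (∑ p, ∑ q, deltaVec S2 p * C2m p q * deltaVec S2 q)) := by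
  have hX := ae_tendstoEmpiricalMoments hmeasX hindepX hidX hmomX
  have hY := ae_tendstoEmpiricalMoments hmeasY hindepY hidY hmomY
  have hweight : Tendsto (fun t => (n2 t : ℝ) / ((n1 t : ℝ) + (n2 t : ℝ))) atTop
      (𝓝 (1 - κ)) := by
    refine (tendsto_const_nhds.sub hratio).congr' ?_
    filter_upwards [hn1.eventually_ge_atTop 1] with t ht
    have : (n1 t : ℝ) + n2 t ≠ 0 := by positivity
    field_simp
    ring
  refine tendstoInMeasure_of_tendsto_ae (fun t => (((measurable_adfVar hmeasX _).const_mul _).add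
    ((measurable_adfVar hmeasY _).const_mul _)).aestronglyMeasurable) ?_
  filter_upwards [hX, hY] with ω hXω hYω
  have h1 := ((hXω.mono (by norm_num)).tendsto_adfVar hmeanX hS1 hpos1.ne' fun p q =>
    (hC1 p q).trans (covariance_vecm_outer (hmeasX 0) hmomX (by norm_num) p q)).comp hn1
  have h2 := ((hYω.mono (by norm_num)).tendsto_adfVar hmeanY hS2 hpos2.ne' fun p q =>
    (hC2 p q).trans (covariance_vecm_outer (hmeasY 0) hmomY (by norm_num) p q)).comp hn2
  exact (hweight.mul h1).add (hratio.mul h2)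

/-- consistency of the pooled ADF variance estimator. -/
theorem pooledVariance_consistent
    {Ω : Type*} [MeasurableSpace Ω] (μ : MeasureTheory.Measure Ω) [IsProbabilityMeasure μ]
    (k : ℕ) (hk : 2 ≤ k)
    (X Y : ℕ → Ω → (Fin k → ℝ))
    (hmeasX : ∀ i, Measurable (X i)) (hmeasY : ∀ i, Measurable (Y i))
    (hindepX : iIndepFun X μ)
    (hindepY : iIndepFun Y μ)
    (hindepXY : IndepFun (fun ω i => X i ω) (fun ω i => Y i ω) μ)
    (hidX : ∀ i, IdentDistrib (X i) (X 0) μ μ)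
    (hidY : ∀ i, IdentDistrib (Y i) (Y 0) μ μ)
    (hmeanX : ∀ a, ∫ ω, X 0 ω a ∂μ = 0) (hmeanY : ∀ a, ∫ ω, Y 0 ω a ∂μ = 0)
    (hmomX : Integrable (fun ω => ‖X 0 ω‖ ^ 8) μ)
    (hmomY : Integrable (fun ω => ‖Y 0 ω‖ ^ 8) μ)
    (S1 S2 : Matrix (Fin k) (Fin k) ℝ)
    (hS1 : ∀ a b, S1 a b = ∫ ω, X 0 ω a * X 0 ω b ∂μ)
    (hS2 : ∀ a b, S2 a b = ∫ ω, Y 0 ω a * Y 0 ω b ∂μ)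
    (hpos1 : 0 < oneSum S1) (hpos2 : 0 < oneSum S2)
    (C1 C2m : Matrix (SymIdx k) (SymIdx k) ℝ)
    (hC1 : ∀ p q, C1 p q = ∫ ω,
      (vecm (outer (X 0 ω)) p - ∫ ω', vecm (outer (X 0 ω')) p ∂μ) *
      (vecm (outer (X 0 ω)) q - ∫ ω', vecm (outer (X 0 ω')) q ∂μ) ∂μ)
    (hC2 : ∀ p q, C2m p q = ∫ ω,
      (vecm (outer (Y 0 ω)) p - ∫ ω', vecm (outer (Y 0 ω')) p ∂μ) *
      (vecm (outer (Y 0 ω)) q - ∫ ω', vecm (outer (Y 0 ω')) q ∂μ) ∂μ)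
    (n1 n2 : ℕ → ℕ) (hn1 : Tendsto n1 atTop atTop) (hn2 : Tendsto n2 atTop atTop)
    (κ : ℝ) (hκ : κ ∈ Set.Ioo (0:ℝ) 1)
    (hratio : Tendsto (fun t => (n1 t : ℝ) / ((n1 t : ℝ) + (n2 t : ℝ))) atTop (nhds κ)) :
    TendstoInMeasure μ
      (fun t ω => pooledVar2 k k (n1 t) (n2 t) (fun i => X i ω) (fun i => Y i ω))
      atTop
      (fun _ => (1 - κ) * (∑ p, ∑ q, deltaVec S1 p * C1 p q * deltaVec S1 q) + κ * (∑ p, ∑ q, deltaVec S2 p * C2m p q * deltaVec S2 q)) :=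
  pooledVariance_consistent_general μ k X Y hmeasX hmeasY hindepX hindepY hidX hidY hmeanX hmeanY
    hmomX hmomY S1 S2 hS1 hS2 hpos1 hpos2 C1 C2m hC1 hC2 n1 n2 hn1 hn2 κ hratio
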